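/- Let λ ≥ 1 and r² = λ²/16 + 5/32 + 9/(256λ²). Then three closed disks, each of radius r, can be placed to cover a closed λ×1 rectangle: the first covering a vertical strip of width S₁ = sqrt(4r² - 1), and the remaining two each covering half (a (λ−S₁)×(1/2) sub-rectangle) of the remaining (λ−S₁)×1 rectangle. -/

import Mathlib

/-!
Split the `λ × 1` rectangle at `x = S₁` into a `S₁ × 1` strip and two `(λ - S₁) × 1/2` halves.
A `w × h` rectangle lies in the disk of radius `ρ` about its centre iff `w² + h² ≤ 4ρ²`, and the
choice of `r` makes both fits exact: `S₁ = (4λ² - 3) / (8λ)`, so `S₁² + 1 = 4r²`, and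
`λ - S₁ = (4λ² + 3) / (8λ)`, so `(λ - S₁)² + (1/2)² = 4r²`.
-/

def box (a b c d : ℝ) : Set (EuclideanSpace ℝ (Fin 2)) :=
  {p | p 0 ∈ Set.Icc a b ∧ p 1 ∈ Set.Icc c d}

lemma sq_sub_midpoint_le {a b x : ℝ} (hx : x ∈ Set.Icc a b) :
    (x - (a + b) / 2) ^ 2 ≤ (b - a) ^ 2 / 4 := by
  nlinarith [mul_nonneg (sub_nonneg.2 hx.1) (sub_nonneg.2 hx.2)]

lemma box_subset_closedBall {a b c d r : ℝ} (hr : 0 ≤ r)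
    (h : (b - a) ^ 2 + (d - c) ^ 2 ≤ 4 * r ^ 2) :
    box a b c d ⊆ Metric.closedBall !₂[(a + b) / 2, (c + d) / 2] r := by
  rintro p ⟨hx, hy⟩
  rw [Metric.mem_closedBall, EuclideanSpace.dist_eq, Real.sqrt_le_left hr, Fin.sum_univ_two]
  simp only [Matrix.cons_val_zero, Matrix.cons_val_one, Real.dist_eq, sq_abs]
  linarith [sq_sub_midpoint_le hx, sq_sub_midpoint_le hy]

lemma box_subset_union (a s b c m d : ℝ) :
    box a b c d ⊆ box a s c d ∪ box s b c m ∪ box s b m d := by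
  rintro p ⟨⟨hxa, hxb⟩, hyc, hyd⟩
  rcases le_total (p 0) s with hxs | hsx
  · exact Or.inl (Or.inl ⟨⟨hxa, hxs⟩, hyc, hyd⟩)
  rcases le_total (p 1) m with hym | hmy
  · exact Or.inl (Or.inr ⟨⟨hsx, hxb⟩, hyc, hym⟩)
  · exact Or.inr ⟨⟨hsx, hxb⟩, hmy, hyd⟩

section Radius

variable {lam r : ℝ} (hlam : lam ≠ 0)
  (hr : r ^ 2 = lam ^ 2 / 16 + 5 / 32 + 9 / (256 * lam ^ 2))
include hlam hr

lemma strip_width_sq_add_one :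
    ((4 * lam ^ 2 - 3) / (8 * lam)) ^ 2 + 1 = 4 * r ^ 2 := by
  rw [hr]; field_simp; ring

lemma sub_strip_width_sq_add :
    (lam - (4 * lam ^ 2 - 3) / (8 * lam)) ^ 2 + (1 / 2) ^ 2 = 4 * r ^ 2 := by
  rw [hr]; field_simp; ring

end Radius

/-- For λ ≥ 1 and r² = λ²/16 + 5/32 + 9/(256λ²), three disks of radius r can
cover the λ×1 rectangle: the first a vertical strip of width S₁ = √(4r²−1),
the other two each half of the remaining (λ−S₁)×1 rectangle. -/
theorem stmt_5 (lam r : ℝ) (hlam : 1 ≤ lam) (hr0 : 0 ≤ r)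
    (hr : r ^ 2 = lam ^ 2 / 16 + 5 / 32 + 9 / (256 * lam ^ 2)) :
    ∃ c₁ c₂ c₃ : EuclideanSpace ℝ (Fin 2),
      box 0 (Real.sqrt (4 * r ^ 2 - 1)) 0 1 ⊆ Metric.closedBall c₁ r ∧
      box (Real.sqrt (4 * r ^ 2 - 1)) lam 0 (1 / 2) ⊆ Metric.closedBall c₂ r ∧
      box (Real.sqrt (4 * r ^ 2 - 1)) lam (1 / 2) 1 ⊆ Metric.closedBall c₃ r ∧
      box 0 lam 0 1 ⊆
        Metric.closedBall c₁ r ∪ Metric.closedBall c₂ r ∪ Metric.closedBall c₃ r := by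
  have hlam0 : lam ≠ 0 := by positivity
  have hstrip := strip_width_sq_add_one hlam0 hr
  have hrest := sub_strip_width_sq_add hlam0 hr
  have hS : Real.sqrt (4 * r ^ 2 - 1) = (4 * lam ^ 2 - 3) / (8 * lam) := by
    rw [← hstrip, add_sub_cancel_right, Real.sqrt_sq]
    exact div_nonneg (by nlinarith) (by positivity)
  rw [hS]
  set S := (4 * lam ^ 2 - 3) / (8 * lam)
  have hb₁ := box_subset_closedBall (a := 0) (b := S) (c := 0) (d := 1) hr0 (by linarith)
  have hb₂ := box_subset_closedBall (a := S) (b := lam) (c := 0) (d := 1 / 2) hr0 (by linarith)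
  have hb₃ := box_subset_closedBall (a := S) (b := lam) (c := 1 / 2) (d := 1) hr0 (by linarith)
  exact ⟨_, _, _, hb₁, hb₂, hb₃, (box_subset_union _ _ _ _ _ _).trans
    (Set.union_subset_union (Set.union_subset_union hb₁ hb₂) hb₃)⟩
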